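/- In Setup B, let J ∈ Λ with n+1 ∈ J and let c = (c_i)_{i∈J} be integers. Then the set F(J,c) is independent of the choice of i₀ ∈ I'∖J: for any two choices i₀, i₀' ∈ I'∖J, the unions ⋃_{𝔪 admissible} V(J,c,𝔪) formed with respect to i₀ and with respect to i₀' are equal as subsets of ℝⁿ. -/

import Mathlib

/-!
Shift the multi-index to `t_i = c_i + m_i` for `i ∈ J` and `t_i = m_i` otherwise. The strict
bound on `⟨x, b_i⟩` then says `t_i ≤ ⌈⟨x, b_i⟩⌉ - 1`, and, since `α_{i₀} > 0`, the ceiling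
bound on `⟨x, b_{i₀}⟩` says exactly
`c_{n+1} ≤ ∑_{i ∈ I' ∖ {i₀}} α_i t_i + α_{i₀} (⌈⟨x, b_{i₀}⟩⌉ - 1)`.
As the weights are positive, an admissible `𝔪` exists iff the largest choice
`t_i = ⌈⟨x, b_i⟩⌉ - 1` works. So `x ∈ F(J,c)` iff `⟨x, b_i⟩ > c_i` on `J ∖ {n+1}` and
`c_{n+1} ≤ ∑_{i ∈ I'} α_i (⌈⟨x, b_i⟩⌉ - 1)`, a description in which `i₀` does not appear.
-/

open scoped RealInnerProductSpace BigOperators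

noncomputable section

/-- Euclidean space `ℝⁿ` with the standard inner product. -/
abbrev E (n : ℕ) : Type := EuclideanSpace ℝ (Fin n)

/-- The index set `I' = {1,…,n'}` inside `Ī = {1,…,n+1}` (index `Fin.last n`
plays the role of `n+1`). -/
def Iprime (n n' : ℕ) : Finset (Fin (n + 1)) := Finset.univ.filter fun i => i.val < n'

/-- `C(J,c) := {x ∈ ℝⁿ : ⟨x, b_i⟩ > c_i for all i ∈ J}`. -/
def CSet (n : ℕ) (b : Fin (n + 1) → E n) (J : Finset (Fin (n + 1)))
    (c : Fin (n + 1) → ℤ) : Set (E n) :=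
  {x | ∀ i ∈ J, (c i : ℝ) < ⟪x, b i⟫}

/-- A multi-index `𝔪 = (m_i)_{i ∈ I'∖{i₀}}` is admissible if `m_i ≥ 0` for every
`i ∈ I' ∩ J` (recall `i₀ ∉ J`). -/
def Admissible (n n' : ℕ) (J : Finset (Fin (n + 1))) (m : Fin (n + 1) → ℤ) : Prop :=
  ∀ i ∈ Iprime n n' ∩ J, 0 ≤ m i

/-- The ceiling bound
`⌈(c_{n+1} − Σ_{i∈I'∩J} α_i(c_i+m_i) − Σ_{i∈I'∩K₁} α_i m_i)/α_{i₀}⌉`,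
where `K₁ = Ī∖(J∪{i₀})`, so `I'∩K₁ = (I'∖J)∖{i₀}`. -/
def ceilB (n n' : ℕ) (α : Fin (n + 1) → ℚ) (J : Finset (Fin (n + 1)))
    (i₀ : Fin (n + 1)) (c m : Fin (n + 1) → ℤ) : ℤ :=
  ⌈((c (Fin.last n) : ℚ) - ∑ i ∈ Iprime n n' ∩ J, α i * ((c i : ℚ) + (m i : ℚ))
      - ∑ i ∈ (Iprime n n' \ J).erase i₀, α i * (m i : ℚ)) / α i₀⌉

/-- `V(J,c,𝔪)` as in Setup B. -/
def VSet (n n' : ℕ) (b : Fin (n + 1) → E n) (α : Fin (n + 1) → ℚ)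
    (J : Finset (Fin (n + 1))) (i₀ : Fin (n + 1)) (c m : Fin (n + 1) → ℤ) :
    Set (E n) :=
  {x | (∀ i ∈ Iprime n n' ∩ J, ((c i : ℝ) + (m i : ℝ)) < ⟪x, b i⟫)
    ∧ (∀ i ∈ (Iprime n n' \ J).erase i₀, (m i : ℝ) < ⟪x, b i⟫)
    ∧ (∀ i ∈ (J \ Iprime n n').erase (Fin.last n), (c i : ℝ) < ⟪x, b i⟫)
    ∧ ((ceilB n n' α J i₀ c m : ℝ) < ⟪x, b i₀⟫)}

/-- `F(J,c) := ⋃_{𝔪 admissible} V(J,c,𝔪)` (for `n+1 ∈ J`, with the choice `i₀`). -/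
def FSetB (n n' : ℕ) (b : Fin (n + 1) → E n) (α : Fin (n + 1) → ℚ)
    (J : Finset (Fin (n + 1))) (i₀ : Fin (n + 1)) (c : Fin (n + 1) → ℤ) : Set (E n) :=
  {x | ∃ m : Fin (n + 1) → ℤ, Admissible n n' J m ∧ x ∈ VSet n n' b α J i₀ c m}

/-- `F(J,c)` in general: the union above when `n+1 ∈ J`, and `C(J,c)` otherwise. -/
def FSetB' (n n' : ℕ) (b : Fin (n + 1) → E n) (α : Fin (n + 1) → ℚ)
    (J : Finset (Fin (n + 1))) (i₀ : Fin (n + 1)) (c : Fin (n + 1) → ℤ) : Set (E n) :=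
  if Fin.last n ∈ J then FSetB n n' b α J i₀ c else CSet n b J c

open Finset

theorem intCast_lt_iff_le_ceil_sub_one {R : Type*} [Ring R] [LinearOrder R]
    [IsStrictOrderedRing R] [FloorRing R] {z : ℤ} {y : R} : (z : R) < y ↔ z ≤ ⌈y⌉ - 1 := by
  rw [← Int.lt_ceil]
  omega

theorem intCast_ceil_div_lt_iff {K R : Type*} [Field K] [LinearOrder K] [IsStrictOrderedRing K]
    [FloorRing K] [Ring R] [LinearOrder R] [IsStrictOrderedRing R] [FloorRing R]
    {q a : K} (ha : 0 < a) {y : R} : ((⌈q / a⌉ : ℤ) : R) < y ↔ q ≤ a * ((⌈y⌉ - 1 : ℤ) : K) := by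
  rw [intCast_lt_iff_le_ceil_sub_one, Int.ceil_le, div_le_iff₀' ha]

theorem exists_shift_le_and_le_sum_iff {ι K : Type*} [Ring K] [LinearOrder K]
    [IsStrictOrderedRing K] {s T : Finset ι} (hT : T ⊆ s) {α : ι → K}
    (hα : ∀ i ∈ s, 0 ≤ α i) (a M : ι → ℤ) (C : K) :
    (∃ m : ι → ℤ, (∀ i ∈ T, 0 ≤ m i) ∧ (∀ i ∈ s, a i + m i ≤ M i) ∧
        C ≤ ∑ i ∈ s, α i * ((a i + m i : ℤ) : K)) ↔
      (∀ i ∈ T, a i ≤ M i) ∧ C ≤ ∑ i ∈ s, α i * (M i : K) := by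
  constructor
  · rintro ⟨m, hm, hmM, hC⟩
    refine ⟨fun i hi => by linarith [hm i hi, hmM i (hT hi)], hC.trans (sum_le_sum fun i hi => ?_)⟩
    exact mul_le_mul_of_nonneg_left (by exact_mod_cast hmM i hi) (hα i hi)
  · rintro ⟨haM, hC⟩
    exact ⟨M - a, fun i hi => by simpa using haM i hi, fun i _ => by simp, by simpa using hC⟩

theorem Finset.erase_eq_inter_union_sdiff_erase {ι : Type*} [DecidableEq ι] {I J : Finset ι}
    {i₀ : ι} (h : i₀ ∉ J) : I.erase i₀ = I ∩ J ∪ (I \ J).erase i₀ := by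
  ext i
  by_cases hi : i = i₀ <;> simp [hi, h]
  tauto

theorem Finset.disjoint_inter_sdiff_erase {ι : Type*} [DecidableEq ι] (I J : Finset ι) (i₀ : ι) :
    Disjoint (I ∩ J) ((I \ J).erase i₀) :=
  disjoint_left.2 fun _ hi hi' => (mem_sdiff.1 (mem_of_mem_erase hi')).2 (mem_inter.1 hi).2

section

variable {n n' : ℕ} {b : Fin (n + 1) → E n} {α : Fin (n + 1) → ℚ} {J : Finset (Fin (n + 1))}
  {i₀ : Fin (n + 1)} {c : Fin (n + 1) → ℤ} {x : E n}

theorem admissible_and_mem_VSet_iff (hα₀ : 0 < α i₀) (hi₀ : i₀ ∉ J) (m : Fin (n + 1) → ℤ) :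
    Admissible n n' J m ∧ x ∈ VSet n n' b α J i₀ c m ↔
      (∀ i ∈ (J \ Iprime n n').erase (Fin.last n), (c i : ℝ) < ⟪x, b i⟫) ∧
      (∀ i ∈ Iprime n n' ∩ J, 0 ≤ m i) ∧
      (∀ i ∈ (Iprime n n').erase i₀, (if i ∈ J then c i else 0) + m i ≤ ⌈⟪x, b i⟫⌉ - 1) ∧
      (c (Fin.last n) : ℚ) - α i₀ * ((⌈⟪x, b i₀⟫⌉ - 1 : ℤ) : ℚ) ≤
        ∑ i ∈ (Iprime n n').erase i₀, α i * (((if i ∈ J then c i else 0) + m i : ℤ) : ℚ) := by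
  have hsum : ∑ i ∈ (Iprime n n').erase i₀, α i * (((if i ∈ J then c i else 0) + m i : ℤ) : ℚ) =
      ∑ i ∈ Iprime n n' ∩ J, α i * ((c i : ℚ) + (m i : ℚ)) +
        ∑ i ∈ (Iprime n n' \ J).erase i₀, α i * (m i : ℚ) := by
    rw [erase_eq_inter_union_sdiff_erase hi₀, sum_union (disjoint_inter_sdiff_erase _ _ _)]
    congr 1 <;> refine sum_congr rfl fun i hi => ?_
    · simp [(mem_inter.1 hi).2]
    · simp [(mem_sdiff.1 (mem_of_mem_erase hi)).2]
  have hbounds : (∀ i ∈ (Iprime n n').erase i₀, (if i ∈ J then c i else 0) + m i ≤ ⌈⟪x, b i⟫⌉ - 1) ↔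
      (∀ i ∈ Iprime n n' ∩ J, ((c i : ℝ) + (m i : ℝ)) < ⟪x, b i⟫) ∧
        ∀ i ∈ (Iprime n n' \ J).erase i₀, (m i : ℝ) < ⟪x, b i⟫ := by
    rw [erase_eq_inter_union_sdiff_erase hi₀, forall_mem_union]
    refine and_congr (forall₂_congr fun i hi => ?_) (forall₂_congr fun i hi => ?_)
    · rw [if_pos (mem_inter.1 hi).2, ← intCast_lt_iff_le_ceil_sub_one]
      rw [Int.cast_add]
    · rw [if_neg (mem_sdiff.1 (mem_of_mem_erase hi)).2, zero_add, intCast_lt_iff_le_ceil_sub_one]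
  rw [hsum, hbounds, VSet, Set.mem_ofPred_eq, ceilB, intCast_ceil_div_lt_iff hα₀, Admissible]
  constructor
  · rintro ⟨hm, hJ, hJ', hB, hceil⟩
    exact ⟨hB, hm, ⟨hJ, hJ'⟩, by linarith⟩
  · rintro ⟨hB, hm, ⟨hJ, hJ'⟩, hceil⟩
    exact ⟨hm, hJ, hJ', hB, by linarith⟩

theorem mem_FSetB_iff (hα : ∀ i ∈ Iprime n n', 0 < α i) (hi₀ : i₀ ∈ Iprime n n' \ J) :
    x ∈ FSetB n n' b α J i₀ c ↔
      (∀ i ∈ (J \ Iprime n n').erase (Fin.last n), (c i : ℝ) < ⟪x, b i⟫) ∧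
      (∀ i ∈ Iprime n n' ∩ J, (c i : ℝ) < ⟪x, b i⟫) ∧
      (c (Fin.last n) : ℚ) ≤ ∑ i ∈ Iprime n n', α i * ((⌈⟪x, b i⟫⌉ - 1 : ℤ) : ℚ) := by
  obtain ⟨hi₀I, hi₀J⟩ := mem_sdiff.1 hi₀
  simp only [FSetB, Set.mem_ofPred_eq, admissible_and_mem_VSet_iff (hα i₀ hi₀I) hi₀J,
    exists_and_left]
  have hT : Iprime n n' ∩ J ⊆ (Iprime n n').erase i₀ :=
    subset_erase.2 ⟨inter_subset_left, fun h => hi₀J (mem_inter.1 h).2⟩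
  rw [exists_shift_le_and_le_sum_iff hT fun i hi => (hα i (mem_of_mem_erase hi)).le,
    ← sum_erase_add _ _ hi₀I, ← sub_le_iff_le_add]
  refine and_congr_right fun _ => and_congr_left fun _ => forall₂_congr fun i hi => ?_
  rw [if_pos (mem_inter.1 hi).2, intCast_lt_iff_le_ceil_sub_one]

end

theorem stmt9 (n n' : ℕ)
    (b : Fin (n + 1) → E n) (α : Fin (n + 1) → ℚ)
    (hα : ∀ i : Fin (n + 1), i.val < n' → 0 < α i)
    (J : Finset (Fin (n + 1)))
    (i₀ i₀' : Fin (n + 1)) (hi₀ : i₀ ∈ Iprime n n' \ J) (hi₀' : i₀' ∈ Iprime n n' \ J)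
    (c : Fin (n + 1) → ℤ) :
    FSetB n n' b α J i₀ c = FSetB n n' b α J i₀' c := by
  have hα' : ∀ i ∈ Iprime n n', 0 < α i := fun i hi => hα i (by simpa [Iprime] using hi)
  ext x
  rw [mem_FSetB_iff hα' hi₀, mem_FSetB_iff hα' hi₀']
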